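/- arXiv:2201.05049 — 4 statements merged into one kernel-verified Lean document; each statement's English description precedes it below -/
import Mathlib

section
/- If u : ℝ → ℝ is bounded, differentiable, increasing, with limits u(−∞)=0 and u(+∞)=1, the kernel J is nonnegative, even, integrable with ∫ J = 1, and (c,U) solves cU' + J*U − U − f(U) = 0 on ℝ with U' integrable and (U')² integrable, then c ∫_ℝ (U'(ξ))² dξ = ∫₀¹ f(s) ds. -/
open MeasureTheory Filter Set Topology intervalIntegral

/-!
Multiply the front equation by `U'` and integrate over `ℝ`. Since `U` runs from `0` to `1`,
the change of variables `s = U ξ` gives `∫ U U' = 1/2` and `∫ f(U) U' = ∫₀¹ f`.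
The nonlocal term also contributes `1/2`: after Fubini it becomes `∫ J(z) K(z) dz` with
`K(z) = ∫ U(ξ - z) U'(ξ) dξ`, and the product rule for `U(ξ) U(ξ + z)` shows
`K(z) + K(-z) = 1`, so evenness of `J` and `∫ J = 1` give `∫ J K = 1/2`.
-/

section Convolution

variable {J U V : ℝ → ℝ} {C : ℝ}

lemma integral_mul_eq_half_mul_of_even {G : ℝ → ℝ} {s : ℝ} (hJeven : ∀ x, J x = J (-x))
    (hJG : Integrable fun z => J z * G z) (hG : ∀ z, G z + G (-z) = s) :
    ∫ z, J z * G z = s / 2 * ∫ z, J z := by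
  have hneg : ∫ z, J z * G z = ∫ z, J z * G (-z) := by
    rw [← integral_neg_eq_self]
    simp only [← hJeven]
  have hJG' : Integrable fun z => J z * G (-z) := by
    simpa only [← hJeven] using hJG.comp_neg
  have hsum : (∫ z, J z * G z) + ∫ z, J z * G (-z) = s * ∫ z, J z := by
    rw [← integral_add hJG hJG', ← MeasureTheory.integral_const_mul]
    simp only [← mul_add, hG, mul_comm s]
  linarith

lemma integral_comp_sub_mul_flip (J U : ℝ → ℝ) (ξ : ℝ) :
    ∫ y, J (ξ - y) * U y = ∫ z, J z * U (ξ - z) := by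
  simpa only [sub_sub_cancel] using
    integral_sub_left_eq_self (fun z => J z * U (ξ - z)) volume ξ

lemma integral_comp_sub_mul_mul_eq_integral (J U V : ℝ → ℝ) (ξ : ℝ) :
    (∫ y, J (ξ - y) * U y) * V ξ = ∫ z, U (ξ - z) * (V ξ * J z) := by
  rw [integral_comp_sub_mul_flip, ← MeasureTheory.integral_mul_const]
  congr 1 with z
  ring

variable (hJ : Integrable J) (hU : Continuous U) (hUC : ∀ x, ‖U x‖ ≤ C) (hV : Integrable V)
include hJ hU hUC hV

lemma integrable_comp_sub_mul_mul_prod :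
    Integrable (fun p : ℝ × ℝ => U (p.1 - p.2) * (V p.1 * J p.2)) (volume.prod volume) :=
  (hV.mul_prod hJ).bdd_mul (hU.comp (continuous_fst.sub continuous_snd)).aestronglyMeasurable
    (ae_of_all _ fun _ => hUC _)

lemma integrable_conv_mul : Integrable fun ξ => (∫ y, J (ξ - y) * U y) * V ξ := by
  simpa only [integral_comp_sub_mul_mul_eq_integral] using
    (integrable_comp_sub_mul_mul_prod hJ hU hUC hV).integral_prod_left

lemma integrable_mul_integral_comp_sub_mul :
    Integrable fun z => J z * ∫ ξ, U (ξ - z) * V ξ := by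
  refine (integrable_comp_sub_mul_mul_prod hJ hU hUC hV).swap.integral_prod_left.congr
    (ae_of_all _ fun z => ?_)
  simp only [Function.comp_apply, Prod.fst_swap, Prod.snd_swap]
  rw [← MeasureTheory.integral_const_mul]
  congr 1 with ξ
  ring

lemma integral_conv_mul :
    ∫ ξ, (∫ y, J (ξ - y) * U y) * V ξ = ∫ z, J z * ∫ ξ, U (ξ - z) * V ξ := by
  simp only [integral_comp_sub_mul_mul_eq_integral]
  rw [integral_integral_swap (integrable_comp_sub_mul_mul_prod hJ hU hUC hV)]
  congr 1 with z
  rw [← MeasureTheory.integral_const_mul]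
  congr 1 with ξ
  ring

end Convolution

section FrontProfile

variable {U : ℝ → ℝ} {S : Set ℝ} {a b : ℝ}

lemma integrable_comp_mul_deriv {φ : ℝ → ℝ} (hφ : Continuous φ) (hU : Differentiable ℝ U)
    (hS : IsCompact S) (hUS : ∀ ξ, U ξ ∈ S) (hV : Integrable (deriv U)) :
    Integrable (fun ξ => φ (U ξ) * deriv U ξ) := by
  obtain ⟨C, hC⟩ := hS.exists_bound_of_continuousOn hφ.continuousOn
  exact hV.bdd_mul (hφ.comp hU.continuous).aestronglyMeasurable
    (ae_of_all _ fun ξ => hC _ (hUS ξ))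

lemma integral_comp_mul_deriv_of_tendsto {φ : ℝ → ℝ} (hφ : Continuous φ)
    (hU : Differentiable ℝ U) (hS : IsCompact S) (hUS : ∀ ξ, U ξ ∈ S)
    (hV : Integrable (deriv U)) (ha : Tendsto U atBot (𝓝 a)) (hb : Tendsto U atTop (𝓝 b)) :
    ∫ ξ, φ (U ξ) * deriv U ξ = ∫ s in a..b, φ s := by
  set F : ℝ → ℝ := fun u => ∫ s in (0 : ℝ)..u, φ s
  have hF : ∀ u, HasDerivAt F (φ u) u := fun u =>
    integral_hasDerivAt_right (hφ.intervalIntegrable 0 u)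
      hφ.aestronglyMeasurable.stronglyMeasurableAtFilter hφ.continuousAt
  have hFc : Continuous F := continuous_iff_continuousAt.mpr fun u => (hF u).continuousAt
  rw [integral_of_hasDerivAt_of_tendsto (fun ξ => (hF (U ξ)).comp ξ (hU ξ).hasDerivAt)
    (integrable_comp_mul_deriv hφ hU hS hUS hV) ((hFc.tendsto a).comp ha)
    ((hFc.tendsto b).comp hb), integral_interval_sub_left (hφ.intervalIntegrable 0 b)
    (hφ.intervalIntegrable 0 a)]

lemma integral_comp_sub_mul_deriv_add_comp_sub_neg (hU : Differentiable ℝ U)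
    (hS : IsCompact S) (hUS : ∀ ξ, U ξ ∈ S) (hV : Integrable (deriv U))
    (ha : Tendsto U atBot (𝓝 a)) (hb : Tendsto U atTop (𝓝 b)) (w : ℝ) :
    (∫ ξ, U (ξ - w) * deriv U ξ) + (∫ ξ, U (ξ - -w) * deriv U ξ) = b ^ 2 - a ^ 2 := by
  obtain ⟨C, hC⟩ := hS.exists_bound_of_continuousOn continuousOn_id
  have hUshift : ∀ ξ, HasDerivAt (fun ξ => U (ξ + w)) (deriv U (ξ + w)) ξ := fun ξ =>
    (hU (ξ + w)).hasDerivAt.comp_add_const ξ w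
  have hprod : ∀ ξ, HasDerivAt (fun ξ => U ξ * U (ξ + w))
      (U (ξ + w) * deriv U ξ + U ξ * deriv U (ξ + w)) ξ := fun ξ =>
    ((hU ξ).hasDerivAt.mul (hUshift ξ)).congr_deriv (by rw [mul_comm])
  have hint₁ : Integrable fun ξ => U (ξ + w) * deriv U ξ :=
    hV.bdd_mul (hU.comp (differentiable_id.add_const w)).continuous.aestronglyMeasurable
      (ae_of_all _ fun ξ => hC _ (hUS _))
  have hint₂ : Integrable fun ξ => U ξ * deriv U (ξ + w) :=
    (hV.comp_add_right w).bdd_mul hU.continuous.aestronglyMeasurable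
      (ae_of_all _ fun ξ => hC _ (hUS _))
  have hlim : ∀ {l : Filter ℝ} {c : ℝ}, Tendsto (· + w) l l → Tendsto U l (𝓝 c) →
      Tendsto (fun ξ => U ξ * U (ξ + w)) l (𝓝 (c ^ 2)) := fun hl hc => by
    simpa only [sq, Function.comp_def] using hc.mul (hc.comp hl)
  have hFTC := integral_of_hasDerivAt_of_tendsto hprod (hint₁.add hint₂)
    (hlim (tendsto_atBot_add_const_right _ w tendsto_id) ha)
    (hlim (tendsto_atTop_add_const_right _ w tendsto_id) hb)
  have hshift : ∫ ξ, U ξ * deriv U (ξ + w) = ∫ ξ, U (ξ - w) * deriv U ξ := by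
    simpa only [add_sub_cancel_right] using
      integral_add_right_eq_self (fun ξ => U (ξ - w) * deriv U ξ) w
  rw [integral_add hint₁ hint₂, hshift] at hFTC
  simp only [sub_neg_eq_add]
  linarith

lemma integral_conv_mul_deriv_of_even {J : ℝ → ℝ} (hJ : Integrable J)
    (hJeven : ∀ x, J x = J (-x)) (hU : Differentiable ℝ U) (hS : IsCompact S) (hUS : ∀ ξ, U ξ ∈ S)
    (hV : Integrable (deriv U)) (ha : Tendsto U atBot (𝓝 a)) (hb : Tendsto U atTop (𝓝 b)) :
    ∫ ξ, (∫ y, J (ξ - y) * U y) * deriv U ξ = (b ^ 2 - a ^ 2) / 2 * ∫ x, J x := by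
  obtain ⟨C, hC⟩ := hS.exists_bound_of_continuousOn continuousOn_id
  have hUC : ∀ ξ, ‖U ξ‖ ≤ C := fun ξ => hC _ (hUS ξ)
  rw [integral_conv_mul hJ hU.continuous hUC hV]
  exact integral_mul_eq_half_mul_of_even hJeven
    (integrable_mul_integral_comp_sub_mul hJ hU.continuous hUC hV)
    (integral_comp_sub_mul_deriv_add_comp_sub_neg hU hS hUS hV ha hb)

end FrontProfile

theorem traveling_front_speed_identity_general
    (J f U : ℝ → ℝ) (c : ℝ)
    (hJeven : ∀ x, J x = J (-x))
    (hJint : Integrable J)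
    (hJone : ∫ x, J x = 1)
    (hf : ContDiff ℝ 2 f)
    (hUrange : ∀ ξ, U ξ ∈ Set.Icc (0 : ℝ) 1)
    (hU : ContDiff ℝ 1 U)
    (hlim0 : Tendsto U atBot (nhds 0))
    (hlim1 : Tendsto U atTop (nhds 1))
    (heq : ∀ ξ, c * deriv U ξ + (∫ y : ℝ, J (ξ - y) * U y) - U ξ - f (U ξ) = 0)
    (hL1 : Integrable (deriv U)) :
    c * ∫ ξ : ℝ, (deriv U ξ) ^ 2 = ∫ s in (0 : ℝ)..1, f s := by
  have hUd : Differentiable ℝ U := hU.differentiable one_ne_zero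
  have hUC : ∀ ξ, ‖U ξ‖ ≤ 1 := fun ξ => by
    rw [Real.norm_of_nonneg (hUrange ξ).1]
    exact (hUrange ξ).2
  have hintU := integrable_comp_mul_deriv continuous_id' hUd isCompact_Icc hUrange hL1
  have hintf := integrable_comp_mul_deriv hf.continuous hUd isCompact_Icc hUrange hL1
  have hintJ := integrable_conv_mul hJint hUd.continuous hUC hL1
  have hmul : ∀ ξ, c * deriv U ξ ^ 2 = U ξ * deriv U ξ + f (U ξ) * deriv U ξ
      - (∫ y, J (ξ - y) * U y) * deriv U ξ := fun ξ => by
    linear_combination deriv U ξ * heq ξ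
  calc c * ∫ ξ, deriv U ξ ^ 2 = ∫ ξ, c * deriv U ξ ^ 2 :=
        (MeasureTheory.integral_const_mul c _).symm
    _ = (∫ ξ, U ξ * deriv U ξ) + (∫ ξ, f (U ξ) * deriv U ξ)
          - ∫ ξ, (∫ y, J (ξ - y) * U y) * deriv U ξ := by
        simp only [hmul]
        rw [integral_sub ?_ hintJ, integral_add hintU hintf]
        exact hintU.add hintf
    _ = ∫ s in (0 : ℝ)..1, f s := by
        rw [integral_comp_mul_deriv_of_tendsto continuous_id' hUd isCompact_Icc hUrange hL1
            hlim0 hlim1, integral_comp_mul_deriv_of_tendsto hf.continuous hUd isCompact_Icc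
            hUrange hL1 hlim0 hlim1, integral_conv_mul_deriv_of_even hJint hJeven hUd
            isCompact_Icc hUrange hL1 hlim0 hlim1, hJone, integral_id]
        ring

/-- the traveling-front speed identity
`c ∫ (U')² dξ = ∫₀¹ f(s) ds`. -/
theorem traveling_front_speed_identity
    (J f U : ℝ → ℝ) (c : ℝ)
    (hJpos : ∀ x, 0 ≤ J x)
    (hJeven : ∀ x, J x = J (-x))
    (hJint : Integrable J)
    (hJone : ∫ x, J x = 1)
    (hf : ContDiff ℝ 2 f)
    (hUrange : ∀ ξ, U ξ ∈ Set.Icc (0 : ℝ) 1)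
    (hU : ContDiff ℝ 1 U)
    (hU' : ∀ ξ, 0 < deriv U ξ)
    (hlim0 : Tendsto U atBot (nhds 0))
    (hlim1 : Tendsto U atTop (nhds 1))
    (heq : ∀ ξ, c * deriv U ξ + (∫ y : ℝ, J (ξ - y) * U y) - U ξ - f (U ξ) = 0)
    (hL1 : Integrable (deriv U))
    (hL2 : Integrable (fun ξ => (deriv U ξ) ^ 2)) :
    c * ∫ ξ : ℝ, (deriv U ξ) ^ 2 = ∫ s in (0 : ℝ)..1, f s :=
  traveling_front_speed_identity_general J f U c hJeven hJint hJone hf hUrange hU hlim0 hlim1 heq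
    hL1
end

section
/- Let J : ℝ → ℝ be nonnegative, even, integrable with ∫ J = 1 and ∫ |x| J(x) dx < ∞. Let U : ℝ → [0,1] be nondecreasing and continuous with U(−∞) = 0, and suppose there exist constants C > 0 and R > 0 such that (J*U)(x) − U(x) ≥ C·U(x) for all x ≤ −R. Then ∫_{−∞}^{0} U(x) dx < ∞. -/
/-!
Integrate `J ⋆ U - U ≥ C U` over `[a, -R]` and swap the integrals (Fubini): for each `z` the
inner integral `∫_a^{-R} (U (x - z) - U x) dx` is the difference of the integrals of `U` over two
intervals of length `|z|`, hence at most `2 |z|`. So `C ∫_a^{-R} U ≤ 2 ∫ |z| |J z| dz` uniformly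
in `a`, and `U ≥ 0` turns this into integrability on `(-∞, -R]`.
-/

open MeasureTheory Filter Set Topology
open scoped Convolution

section

variable {J U : ℝ → ℝ} {K : ℝ}

lemma intervalIntegrable_of_measurable_of_norm_le (hU : Measurable U) (hUK : ∀ x, ‖U x‖ ≤ K)
    (a b : ℝ) : IntervalIntegrable U volume a b :=
  intervalIntegrable_const.mono_fun' hU.aestronglyMeasurable (.of_forall hUK)

lemma abs_intervalIntegral_comp_sub_sub_le (hU : Measurable U) (hUK : ∀ x, ‖U x‖ ≤ K)
    (a b z : ℝ) : |(∫ x in a..b, U (x - z)) - ∫ x in a..b, U x| ≤ 2 * K * |z| := by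
  have hUi := intervalIntegrable_of_measurable_of_norm_le hU hUK
  have hend : ∀ c, |∫ x in c - z..c, U x| ≤ K * |z| := fun c => by
    simpa using intervalIntegral.norm_integral_le_of_norm_le_const (a := c - z) (b := c)
      fun x _ => hUK x
  rw [intervalIntegral.integral_comp_sub_right,
    intervalIntegral.integral_interval_sub_interval_comm (hUi _ _) (hUi _ _) (hUi _ _)]
  linarith [abs_sub (∫ x in a - z..a, U x) (∫ x in b - z..b, U x), hend a, hend b]

lemma intervalIntegral_integral_mul_sub_swap (hJ : Integrable J) (hU : Measurable U)
    (hUK : ∀ x, ‖U x‖ ≤ K) (a b : ℝ) :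
    ∫ x in a..b, ∫ z, J z * (U (x - z) - U x) =
      ∫ z, J z * ((∫ x in a..b, U (x - z)) - ∫ x in a..b, U x) := by
  have : IsFiniteMeasure (volume.restrict (uIoc a b)) := Real.isFiniteMeasure_restrict_Ioc _ _
  have hdiff : ∀ p : ℝ × ℝ, ‖U (p.1 - p.2) - U p.1‖ ≤ 2 * K := fun p =>
    (norm_sub_le _ _).trans (by linarith [hUK (p.1 - p.2), hUK p.1])
  have hint : Integrable (fun p : ℝ × ℝ => J p.2 * (U (p.1 - p.2) - U p.1))
      ((volume.restrict (uIoc a b)).prod volume) :=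
    (hJ.comp_snd _).mul_bdd ((hU.comp (measurable_fst.sub measurable_snd)).sub
      (hU.comp measurable_fst)).aestronglyMeasurable (.of_forall hdiff)
  rw [intervalIntegral_integral_swap hint]
  congr 1 with z
  have hUz : IntervalIntegrable (fun x => U (x - z)) volume a b :=
    intervalIntegrable_of_measurable_of_norm_le (hU.comp (measurable_id.sub_const z))
      (fun x => hUK (x - z)) a b
  rw [intervalIntegral.integral_const_mul, intervalIntegral.integral_sub hUz
    (intervalIntegrable_of_measurable_of_norm_le hU hUK a b)]

lemma intervalIntegral_convolution_sub_self_le (hJ : Integrable J) (hJ1 : ∫ x, J x = 1)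
    (hJmom : Integrable fun x => |x| * J x) (hU : Measurable U) (hUK : ∀ x, ‖U x‖ ≤ K)
    (a b : ℝ) :
    ∫ x in a..b, ((J ⋆ U) x - U x) ≤ 2 * K * ∫ z, |z| * |J z| := by
  have hconv : ∀ x, (J ⋆ U) x - U x = ∫ z, J z * (U (x - z) - U x) := fun x => by
    have hJU : Integrable fun z => J z * U (x - z) :=
      hJ.mul_bdd (hU.comp (measurable_const.sub measurable_id)).aestronglyMeasurable
        (.of_forall fun z => hUK (x - z))
    simp_rw [convolution_lsmul, smul_eq_mul, mul_sub]
    rw [integral_sub hJU (hJ.mul_const _), integral_mul_const, hJ1, one_mul]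
  have hmom : Integrable fun z => 2 * K * (|z| * |J z|) := by
    refine (hJmom.norm.const_mul (2 * K)).congr (.of_forall fun z => ?_)
    simp
  simp_rw [hconv]
  rw [intervalIntegral_integral_mul_sub_swap hJ hU hUK, ← integral_const_mul]
  refine (le_abs_self _).trans ?_
  rw [← Real.norm_eq_abs]
  refine norm_integral_le_of_norm_le hmom (.of_forall fun z => ?_)
  rw [Real.norm_eq_abs, abs_mul]
  nlinarith [abs_intervalIntegral_comp_sub_sub_le hU hUK a b z, abs_nonneg (J z)]

end

theorem front_tail_integrable_general
    (J U : ℝ → ℝ) (C R : ℝ)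
    (hJint : Integrable J)
    (hJone : ∫ x, J x = 1)
    (hJmom : Integrable (fun x => |x| * J x))
    (hUcont : Continuous U)
    (hUrange : ∀ x, U x ∈ Set.Icc (0 : ℝ) 1)
    (hC : 0 < C)
    (hineq : ∀ x ≤ -R, C * U x ≤ (∫ y : ℝ, J (x - y) * U y) - U x) :
    IntegrableOn U (Set.Iic (0 : ℝ)) := by
  have hU1 : ∀ x, ‖U x‖ ≤ 1 := fun x => by
    rw [Real.norm_of_nonneg (hUrange x).1]; exact (hUrange x).2
  have hJU : Continuous (J ⋆ U) :=
    BddAbove.continuous_convolution_right_of_integrable _ ⟨1, by rintro _ ⟨x, rfl⟩; exact hU1 x⟩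
      hJint hUcont
  have hbound : ∀ a ≤ -R, ∫ x in a..-R, ‖U x‖ ≤ 2 * (∫ z, |z| * |J z|) / C := by
    intro a ha
    rw [le_div_iff₀ hC]
    calc (∫ x in a..-R, ‖U x‖) * C = ∫ x in a..-R, C * U x := by
          rw [← intervalIntegral.integral_mul_const]
          refine intervalIntegral.integral_congr fun x _ => ?_
          rw [Real.norm_of_nonneg (hUrange x).1, mul_comm]
      _ ≤ ∫ x in a..-R, ((J ⋆ U) x - U x) :=
          intervalIntegral.integral_mono_on ha ((hUcont.const_mul C).intervalIntegrable _ _)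
            ((hJU.sub hUcont).intervalIntegrable _ _) fun x hx => by
              simpa [convolution_lsmul_swap] using hineq x hx.2
      _ ≤ 2 * ∫ z, |z| * |J z| := by
          simpa using intervalIntegral_convolution_sub_self_le hJint hJone hJmom
            hUcont.measurable hU1 a (-R)
  have hIic : IntegrableOn U (Iic (-R)) :=
    integrableOn_Iic_of_intervalIntegral_norm_bounded _ (-R) (fun _ => hUcont.integrableOn_Ioc)
      tendsto_id ((eventually_le_atBot (-R)).mono hbound)
  exact (hIic.union hUcont.integrableOn_Icc).mono_set Iic_subset_Iic_union_Icc

/-- integrability of the front tail: `∫_{−∞}^0 U < ∞`. -/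
theorem front_tail_integrable
    (J U : ℝ → ℝ) (C R : ℝ)
    (hJpos : ∀ x, 0 ≤ J x)
    (hJeven : ∀ x, J x = J (-x))
    (hJint : Integrable J)
    (hJone : ∫ x, J x = 1)
    (hJmom : Integrable (fun x => |x| * J x))
    (hUcont : Continuous U)
    (hUmono : Monotone U)
    (hUrange : ∀ x, U x ∈ Set.Icc (0 : ℝ) 1)
    (hUlim : Tendsto U atBot (nhds 0))
    (hC : 0 < C) (hR : 0 < R)
    (hineq : ∀ x ≤ -R, C * U x ≤ (∫ y : ℝ, J (x - y) * U y) - U x) :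
    IntegrableOn U (Set.Iic (0 : ℝ)) :=
  front_tail_integrable_general J U C R hJint hJone hJmom hUcont hUrange hC hineq
end

section
/- For a nonnegative even integrable kernel J with ∫|x|J(x)dx < ∞ and any bounded measurable U : ℝ → [0,1] that is nondecreasing with U(−∞)=0, the identity ∫_{−∞}^{−R} [(J*U)(x) − U(x)] dx = −∫_ℝ y J(y) ∫₀¹ [U(−R − s y) − 0] ds dy holds whenever U is C¹ with integrable derivative, and in particular ∫_{−∞}^{−R} [(J*U)(x) − U(x)] dx ≤ ∫_ℝ |y| J(y) dy. -/
open MeasureTheory Filter Set Topology intervalIntegral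

/-! For fixed `y`, the function `a ↦ y * ∫₀¹ U (a - s y) ds = ∫_{a-y}^a U` has derivative
`U a - U (a - y)`, of constant sign since `U` is monotone, and tends to `0` at `-∞`. Hence
`∫_{x ≤ a} (U x - U (x - y)) dx = y * ∫₀¹ U (a - s y) ds`, and the same holds with absolute values
and `|y|`. As `∫ J = 1`, `U x - (J * U) x = ∫ J y (U x - U (x - y)) dy`, so integrating over
`x ≤ a` and exchanging the integrals, which `∫ |y| J y dy < ∞` justifies, gives the identity; the
bound follows from `0 ≤ ∫₀¹ U (a - s y) ds ≤ 1`. -/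

theorem integrableOn_Iic_deriv_of_nonneg' {g g' : ℝ → ℝ} {a m : ℝ}
    (hderiv : ∀ x ∈ Iic a, HasDerivAt g (g' x) x) (g'pos : ∀ x ∈ Iic a, 0 ≤ g' x)
    (hg : Tendsto g atBot (𝓝 m)) : IntegrableOn g' (Iic a) := by
  have hint : ∀ b ≤ a, IntegrableOn g' (Ioc b a) := fun b hb =>
    integrableOn_deriv_of_nonneg
      (fun x hx => (hderiv x hx.2).continuousAt.continuousWithinAt)
      (fun x hx => hderiv x hx.2.le) fun x hx => g'pos x hx.2.le
  refine integrableOn_Iic_of_intervalIntegral_norm_tendsto (g a - m) a (fun b => ?_)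
    tendsto_id ((hg.const_sub (g a)).congr' ?_)
  · rcases le_total b a with hb | hb
    · exact hint b hb
    · simp [Ioc_eq_empty_of_le hb]
  filter_upwards [Iic_mem_atBot a] with b hb
  calc g a - g b = ∫ x in b..a, g' x :=
        (integral_eq_sub_of_hasDerivAt (fun x hx => hderiv x (by
          rw [uIcc_of_le hb] at hx; exact hx.2))
          ((intervalIntegrable_iff_integrableOn_Ioc_of_le hb).2 (hint b hb))).symm
    _ = ∫ x in b..a, ‖g' x‖ := by
        simp_rw [integral_of_le hb]
        exact setIntegral_congr_fun measurableSet_Ioc fun x hx =>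
          (Real.norm_of_nonneg (g'pos x hx.2)).symm

section ShiftDifference

variable {U : ℝ → ℝ}

theorem hasDerivAt_mul_integral_comp_sub_mul (hUc : Continuous U) (y a : ℝ) :
    HasDerivAt (fun a => y * ∫ s in (0 : ℝ)..1, U (a - s * y)) (U a - U (a - y)) a := by
  have hprimitive : (fun a => y * ∫ s in (0 : ℝ)..1, U (a - s * y)) =
      fun a => (∫ t in (0 : ℝ)..a, U t) - ∫ t in (0 : ℝ)..(a - y), U t := by
    funext a
    rw [integral_interval_sub_left (hUc.intervalIntegrable _ _) (hUc.intervalIntegrable _ _)]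
    simp [mul_comm]
  rw [hprimitive]
  exact (hUc.integral_hasStrictDerivAt 0 a).hasDerivAt.sub
    ((hUc.integral_hasStrictDerivAt 0 (a - y)).hasDerivAt.comp_sub_const a y)

theorem tendsto_mul_integral_comp_sub_mul_atBot (hUc : Continuous U) {C : ℝ}
    (hUb : ∀ x, |U x| ≤ C) (hUlim : Tendsto U atBot (𝓝 0)) (y : ℝ) :
    Tendsto (fun a => y * ∫ s in (0 : ℝ)..1, U (a - s * y)) atBot (𝓝 0) := by
  simpa using (tendsto_integral_filter_of_dominated_convergence (fun _ => C)
    (Eventually.of_forall fun a => (hUc.comp (continuous_const.sub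
      (continuous_id.mul continuous_const))).aestronglyMeasurable)
    (Eventually.of_forall fun a => Eventually.of_forall fun s _ => hUb _)
    intervalIntegrable_const
    (Eventually.of_forall fun s _ =>
      hUlim.comp (tendsto_atBot_add_const_right _ (-(s * y)) tendsto_id))).const_mul y

theorem integral_comp_sub_mul_mem_Icc (hUc : Continuous U) (hU01 : ∀ x, U x ∈ Icc 0 1)
    (y a : ℝ) : (∫ s in (0 : ℝ)..1, U (a - s * y)) ∈ Icc 0 1 := by
  have hint : IntervalIntegrable (fun s => U (a - s * y)) volume 0 1 :=
    (hUc.comp (continuous_const.sub (continuous_id.mul continuous_const))).intervalIntegrable _ _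
  refine ⟨integral_nonneg zero_le_one fun s _ => (hU01 _).1, ?_⟩
  simpa using integral_mono_on zero_le_one hint intervalIntegrable_const fun s _ => (hU01 _).2

theorem integrableOn_Iic_sub_comp_sub (hUc : Continuous U) (hUmono : Monotone U) {C : ℝ}
    (hUb : ∀ x, |U x| ≤ C) (hUlim : Tendsto U atBot (𝓝 0)) (y a : ℝ) :
    IntegrableOn (fun x => U x - U (x - y)) (Iic a) := by
  have hlim := tendsto_mul_integral_comp_sub_mul_atBot hUc hUb hUlim y
  rcases le_total 0 y with hy | hy
  · exact integrableOn_Iic_deriv_of_nonneg'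
      (fun x _ => hasDerivAt_mul_integral_comp_sub_mul hUc y x)
      (fun x _ => sub_nonneg.2 (hUmono (by linarith))) hlim
  · exact integrableOn_fun_neg_iff.1 (integrableOn_Iic_deriv_of_nonneg'
      (fun x _ => (hasDerivAt_mul_integral_comp_sub_mul hUc y x).neg)
      (fun x _ => neg_nonneg.2 (sub_nonpos.2 (hUmono (by linarith)))) hlim.neg)

theorem integral_Iic_sub_comp_sub (hUc : Continuous U) (hUmono : Monotone U) {C : ℝ}
    (hUb : ∀ x, |U x| ≤ C) (hUlim : Tendsto U atBot (𝓝 0)) (y a : ℝ) :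
    ∫ x in Iic a, (U x - U (x - y)) = y * ∫ s in (0 : ℝ)..1, U (a - s * y) := by
  have hlim := tendsto_mul_integral_comp_sub_mul_atBot hUc hUb hUlim y
  rw [integral_Iic_of_hasDerivAt_of_tendsto'
    (fun x _ => hasDerivAt_mul_integral_comp_sub_mul hUc y x)
    (integrableOn_Iic_sub_comp_sub hUc hUmono hUb hUlim y a) hlim, sub_zero]

theorem integral_Iic_abs_sub_comp_sub (hUc : Continuous U) (hUmono : Monotone U) {C : ℝ}
    (hUb : ∀ x, |U x| ≤ C) (hUlim : Tendsto U atBot (𝓝 0)) (y a : ℝ) :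
    ∫ x in Iic a, |U x - U (x - y)| = |y| * ∫ s in (0 : ℝ)..1, U (a - s * y) := by
  rcases le_total 0 y with hy | hy
  · have habs : ∀ x, |U x - U (x - y)| = U x - U (x - y) := fun x =>
      abs_of_nonneg (sub_nonneg.2 (hUmono (by linarith)))
    simp_rw [habs, integral_Iic_sub_comp_sub hUc hUmono hUb hUlim, abs_of_nonneg hy]
  · have habs : ∀ x, |U x - U (x - y)| = -(U x - U (x - y)) := fun x =>
      abs_of_nonpos (sub_nonpos.2 (hUmono (by linarith)))
    simp_rw [habs, MeasureTheory.integral_neg, integral_Iic_sub_comp_sub hUc hUmono hUb hUlim,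
      abs_of_nonpos hy, neg_mul]

end ShiftDifference

theorem abs_mul_le_of_mem_Icc {b c : ℝ} (hc : c ∈ Icc (0 : ℝ) 1) : |b * c| ≤ |b| := by
  rw [abs_mul, abs_of_nonneg hc.1]
  exact mul_le_of_le_one_right (abs_nonneg b) hc.2

theorem sub_integral_mul_comp_sub {J U : ℝ → ℝ} (hJint : Integrable J) (hJone : ∫ x, J x = 1)
    (hUc : Continuous U) {C : ℝ} (hUb : ∀ x, |U x| ≤ C) (x : ℝ) :
    U x - ∫ y, J (x - y) * U y = ∫ y, J y * (U x - U (x - y)) := by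
  have hswap : ∫ y, J (x - y) * U y = ∫ y, J y * U (x - y) := by
    simpa using (integral_sub_left_eq_self (fun y => J y * U (x - y)) volume x)
  have hJU : Integrable fun y => J y * U (x - y) :=
    hJint.mul_bdd (hUc.comp (continuous_const.sub continuous_id)).aestronglyMeasurable
      (Eventually.of_forall fun y => hUb (x - y))
  calc U x - ∫ y, J (x - y) * U y = (∫ y, J y * U x) - ∫ y, J y * U (x - y) := by
        rw [hswap, MeasureTheory.integral_mul_const, hJone, one_mul]
    _ = ∫ y, J y * (U x - U (x - y)) := by
        rw [← integral_sub (hJint.mul_const _) hJU]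
        simp_rw [mul_sub]

theorem integral_Iic_integral_mul_comp_sub_sub {J U : ℝ → ℝ} (hJpos : ∀ x, 0 ≤ J x)
    (hJint : Integrable J) (hJone : ∫ x, J x = 1) (hJmom : Integrable fun y => |y| * J y)
    (hUc : Continuous U) (hUmono : Monotone U) (hU01 : ∀ x, U x ∈ Icc (0 : ℝ) 1)
    (hUlim : Tendsto U atBot (𝓝 0)) (a : ℝ) :
    ∫ x in Iic a, ((∫ y, J (x - y) * U y) - U x) =
      -∫ y, y * J y * ∫ s in (0 : ℝ)..1, U (a - s * y) := by
  have hUb : ∀ x, |U x| ≤ 1 := fun x => abs_le.2 ⟨by linarith [(hU01 x).1], (hU01 x).2⟩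
  have hnorm : ∀ y, ∫ x in Iic a, ‖J y * (U x - U (x - y))‖ =
      |y| * J y * ∫ s in (0 : ℝ)..1, U (a - s * y) := fun y => by
    simp_rw [norm_mul, Real.norm_eq_abs, abs_of_nonneg (hJpos y)]
    rw [MeasureTheory.integral_const_mul, integral_Iic_abs_sub_comp_sub hUc hUmono hUb hUlim]
    ring
  have hF : Integrable (Function.uncurry fun x y => J y * (U x - U (x - y)))
      ((volume.restrict (Iic a)).prod volume) := by
    refine (integrable_prod_iff' (hJint.aestronglyMeasurable.comp_snd.mul
      (by fun_prop : Continuous fun p : ℝ × ℝ => U p.1 - U (p.1 - p.2)).aestronglyMeasurable)).2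
      ⟨Eventually.of_forall fun y =>
        (integrableOn_Iic_sub_comp_sub hUc hUmono hUb hUlim y a).const_mul (J y), ?_⟩
    simp only [Pi.mul_apply, hnorm]
    refine hJmom.mono' ((continuous_abs.aestronglyMeasurable.mul
      hJint.aestronglyMeasurable).mul (continuous_parametric_intervalIntegral_of_continuous'
        (by fun_prop) 0 1).aestronglyMeasurable) (Eventually.of_forall fun y => ?_)
    exact (abs_mul_le_of_mem_Icc (integral_comp_sub_mul_mem_Icc hUc hU01 y a)).trans_eq
      (abs_of_nonneg (mul_nonneg (abs_nonneg y) (hJpos y)))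
  calc ∫ x in Iic a, ((∫ y, J (x - y) * U y) - U x)
      = -∫ x in Iic a, ∫ y, J y * (U x - U (x - y)) := by
        simp_rw [← sub_integral_mul_comp_sub hJint hJone hUc hUb, ← MeasureTheory.integral_neg,
          neg_sub]
    _ = -∫ y, ∫ x in Iic a, J y * (U x - U (x - y)) := by rw [integral_integral_swap hF]
    _ = -∫ y, y * J y * ∫ s in (0 : ℝ)..1, U (a - s * y) := by
        simp_rw [MeasureTheory.integral_const_mul, integral_Iic_sub_comp_sub hUc hUmono hUb hUlim]
        congr 1
        exact integral_congr_ae (Eventually.of_forall fun y => by ring)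

theorem tail_convolution_identity_general
    (J U : ℝ → ℝ) (R : ℝ)
    (hJpos : ∀ x, 0 ≤ J x)
    (hJint : Integrable J)
    (hJone : ∫ x, J x = 1)
    (hJmom : Integrable (fun y => |y| * J y))
    (hU : ContDiff ℝ 1 U)
    (hUmono : Monotone U)
    (hUrange : ∀ x, U x ∈ Set.Icc (0 : ℝ) 1)
    (hUlim : Tendsto U atBot (nhds 0)) :
    (∫ x in Set.Iic (-R), ((∫ y : ℝ, J (x - y) * U y) - U x)) =
        -∫ y : ℝ, y * J y * ∫ s in (0 : ℝ)..1, (U (-R - s * y) - 0) ∧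
      (∫ x in Set.Iic (-R), ((∫ y : ℝ, J (x - y) * U y) - U x)) ≤
        ∫ y : ℝ, |y| * J y := by
  have hidentity := integral_Iic_integral_mul_comp_sub_sub hJpos hJint hJone hJmom hU.continuous
    hUmono hUrange hUlim (-R)
  simp_rw [sub_zero]
  refine ⟨hidentity, ?_⟩
  rw [hidentity]
  refine (neg_le_abs _).trans ?_
  rw [← Real.norm_eq_abs]
  refine norm_integral_le_of_norm_le hJmom (Eventually.of_forall fun y => ?_)
  calc ‖y * J y * ∫ s in (0 : ℝ)..1, U (-R - s * y)‖ ≤ |y * J y| :=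
        abs_mul_le_of_mem_Icc (integral_comp_sub_mul_mem_Icc hU.continuous hUrange y (-R))
    _ = |y| * J y := by rw [abs_mul, abs_of_nonneg (hJpos y)]

/-- integral identity for `∫_{−∞}^{−R} (J*U − U)` and the first-moment bound. -/
theorem tail_convolution_identity
    (J U : ℝ → ℝ) (R : ℝ)
    (hJpos : ∀ x, 0 ≤ J x)
    (hJeven : ∀ x, J x = J (-x))
    (hJint : Integrable J)
    (hJone : ∫ x, J x = 1)
    (hJmom : Integrable (fun y => |y| * J y))
    (hU : ContDiff ℝ 1 U)
    (hUmono : Monotone U)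
    (hUrange : ∀ x, U x ∈ Set.Icc (0 : ℝ) 1)
    (hUlim : Tendsto U atBot (nhds 0))
    (hU'int : Integrable (deriv U))
    (hR : 0 < R) :
    (∫ x in Set.Iic (-R), ((∫ y : ℝ, J (x - y) * U y) - U x)) =
        -∫ y : ℝ, y * J y * ∫ s in (0 : ℝ)..1, (U (-R - s * y) - 0) ∧
      (∫ x in Set.Iic (-R), ((∫ y : ℝ, J (x - y) * U y) - U x)) ≤
        ∫ y : ℝ, |y| * J y :=
  tail_convolution_identity_general J U R hJpos hJint hJone hJmom hU hUmono hUrange hUlim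
end

section
/- Let g : [0,∞) → [0,1] be continuous and suppose for every h > 0 there exists t^h ∈ [0,∞] such that g(t+h) ≤ g(t) for all t < t^h and g(t+h) ≥ g(t) for all t ≥ t^h, and suppose t^h ≤ t^{h/2} ≤ t^h + h/2 for all h > 0. Then t* := lim_{n→∞} t^{h/2ⁿ} exists (for any fixed h > 0) and g is non-increasing on [0, t*) and non-decreasing on [t*, ∞). -/
open MeasureTheory Filter Set Topology Real

private lemma chain_le (g : ℝ → ℝ) (s h' : ℝ) (k : ℕ)
    (hs : ∀ j < k, g (s + j * h' + h') ≤ g (s + j * h')) :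
    g (s + k * h') ≤ g s := by
  induction k with
  | zero => simp
  | succ k ih =>
    have h1 : g (s + (k + 1 : ℕ) * h') = g (s + k * h' + h') := by
      push_cast; ring_nf
    rw [h1]
    exact le_trans (hs k (Nat.lt_succ_self k))
      (ih fun j hj => hs j (hj.trans (Nat.lt_succ_self k)))

private lemma chain_ge (g : ℝ → ℝ) (s h' : ℝ) (k : ℕ)
    (hs : ∀ j < k, g (s + j * h') ≤ g (s + j * h' + h')) :
    g s ≤ g (s + k * h') := by
  induction k with
  | zero => simp
  | succ k ih =>
    have h1 : g (s + (k + 1 : ℕ) * h') = g (s + k * h' + h') := by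
      push_cast; ring_nf
    rw [h1]
    exact le_trans (ih fun j hj => hs j (hj.trans (Nat.lt_succ_self k)))
      (hs k (Nat.lt_succ_self k))

/-- helper: floor approximation sequence tends to t -/
private lemma seq_tendsto (s t c : ℝ) (hc : 0 < c) (hst : s ≤ t) :
    Tendsto (fun m : ℕ => s + (⌊(t - s) / (c / 2 ^ m)⌋₊ : ℝ) * (c / 2 ^ m)) atTop (nhds t) := by
  have hpos : ∀ m : ℕ, (0 : ℝ) < c / 2 ^ m := fun m => by positivity
  have hub : ∀ m : ℕ, s + (⌊(t - s) / (c / 2 ^ m)⌋₊ : ℝ) * (c / 2 ^ m) ≤ t := by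
    intro m
    have h1 := (le_div_iff₀ (hpos m)).mp (Nat.floor_le (div_nonneg (sub_nonneg.mpr hst) (hpos m).le))
    linarith
  have hlb : ∀ m : ℕ, t - c / 2 ^ m ≤ s + (⌊(t - s) / (c / 2 ^ m)⌋₊ : ℝ) * (c / 2 ^ m) := by
    intro m
    have h1 := (div_lt_iff₀ (hpos m)).mp (Nat.lt_floor_add_one ((t - s) / (c / 2 ^ m)))
    nlinarith [hpos m]
  have hc0 : Tendsto (fun m : ℕ => c / 2 ^ m) atTop (nhds 0) := by
    have := tendsto_pow_atTop_nhds_zero_of_lt_one (by norm_num : (0:ℝ) ≤ 1/2) (by norm_num : (1:ℝ)/2 < 1)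
    have h2 : (fun m : ℕ => c / 2 ^ m) = fun m : ℕ => c * (1/2) ^ m := by
      funext m; rw [div_pow]; ring
    rw [h2]
    simpa using this.const_mul c
  have hlow : Tendsto (fun m : ℕ => t - c / 2 ^ m) atTop (nhds t) := by
    simpa using tendsto_const_nhds.sub hc0
  exact tendsto_of_tendsto_of_tendsto_of_le_of_le hlow tendsto_const_nhds hlb hub

/-- existence of the limiting threshold time `t* = lim t^{h/2ⁿ}` and the
resulting monotonicity pattern of `g`: non-increasing on `[0,t*)`, non-decreasing on
`[t*,∞)`. Threshold times take values in `[0,∞]`, modeled in `EReal`. -/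
theorem threshold_time_limit
    (g : ℝ → ℝ) (T : ℝ → EReal)
    (hgcont : ContinuousOn g (Set.Ici (0 : ℝ)))
    (hgrange : ∀ t ≥ (0 : ℝ), g t ∈ Set.Icc (0 : ℝ) 1)
    (hTnonneg : ∀ h > (0 : ℝ), 0 ≤ T h)
    (hbefore : ∀ h > (0 : ℝ), ∀ t ≥ (0 : ℝ), (t : EReal) < T h → g (t + h) ≤ g t)
    (hafter : ∀ h > (0 : ℝ), ∀ t ≥ (0 : ℝ), T h ≤ (t : EReal) → g t ≤ g (t + h))
    (hnest : ∀ h > (0 : ℝ),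
      T h ≤ T (h / 2) ∧ T (h / 2) ≤ T h + ((h / 2 : ℝ) : EReal)) :
    ∀ h > (0 : ℝ), ∃ tstar : EReal,
      Tendsto (fun n : ℕ => T (h / 2 ^ n)) atTop (nhds tstar) ∧
      (∀ s t : ℝ, 0 ≤ s → s ≤ t → (t : EReal) < tstar → g t ≤ g s) ∧
      (∀ s t : ℝ, tstar ≤ (s : EReal) → s ≤ t → g s ≤ g t) := by
  intro h hh
  have hpos : ∀ n : ℕ, (0 : ℝ) < h / 2 ^ n := fun n => by positivity
  have hmono : Monotone (fun n : ℕ => T (h / 2 ^ n)) := by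
    apply monotone_nat_of_le_succ
    intro n
    have := (hnest (h / 2 ^ n) (hpos n)).1
    have heq : h / 2 ^ n / 2 = h / 2 ^ (n + 1) := by
      rw [pow_succ]; ring
    rwa [heq] at this
  refine ⟨⨆ n, T (h / 2 ^ n), tendsto_atTop_iSup hmono, ?_, ?_⟩
  · -- non-increasing before tstar
    intro s t hs hst ht
    obtain ⟨n₀, hn₀⟩ := lt_iSup_iff.mp ht
    -- sequence of step sizes h / 2 ^ (n₀ + m)
    have key : ∀ m : ℕ,
        g (s + (⌊(t - s) / (h / 2 ^ (n₀ + m))⌋₊ : ℝ) * (h / 2 ^ (n₀ + m))) ≤ g s := by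
      intro m
      set c := h / 2 ^ (n₀ + m) with hcdef
      have hcpos : 0 < c := hpos (n₀ + m)
      set k := ⌊(t - s) / c⌋₊ with hkdef
      apply chain_le
      intro j hj
      have hjb : s + (j : ℝ) * c + c ≤ t := by
        have h1 : ((j : ℝ) + 1) * c ≤ (k : ℝ) * c := by
          have : (j : ℝ) + 1 ≤ (k : ℝ) := by exact_mod_cast hj
          nlinarith
        have h2 : (k : ℝ) * c ≤ t - s := by
          have := Nat.floor_le (div_nonneg (sub_nonneg.mpr hst) hcpos.le)
          calc (k : ℝ) * c ≤ (t - s) / c * c := by nlinarith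
            _ = t - s := by field_simp
        nlinarith
      have hjnn : (0 : ℝ) ≤ s + (j : ℝ) * c := by positivity
      apply hbefore c hcpos _ hjnn
      calc ((s + (j : ℝ) * c : ℝ) : EReal) ≤ (t : EReal) := by
            exact_mod_cast (by nlinarith : s + (j : ℝ) * c ≤ t)
        _ < T (h / 2 ^ n₀) := hn₀
        _ ≤ T (h / 2 ^ (n₀ + m)) := hmono (Nat.le_add_right _ _)
    -- take limit m → ∞
    have hts : Tendsto (fun m : ℕ => s + (⌊(t - s) / (h / 2 ^ n₀ / 2 ^ m)⌋₊ : ℝ) * (h / 2 ^ n₀ / 2 ^ m)) atTop (nhds t) :=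
      seq_tendsto s t (h / 2 ^ n₀) (hpos n₀) hst
    have heq : ∀ m : ℕ, h / 2 ^ n₀ / 2 ^ m = h / 2 ^ (n₀ + m) := by
      intro m; rw [pow_add]; ring
    simp only [heq] at hts
    have hmem : ∀ m : ℕ, s + (⌊(t - s) / (h / 2 ^ (n₀ + m))⌋₊ : ℝ) * (h / 2 ^ (n₀ + m)) ∈ Set.Ici (0 : ℝ) := by
      intro m
      have : (0:ℝ) ≤ (⌊(t - s) / (h / 2 ^ (n₀ + m))⌋₊ : ℝ) * (h / 2 ^ (n₀ + m)) := by positivity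
      simp only [Set.mem_Ici]; linarith
    have hcw : Tendsto (fun m : ℕ => g (s + (⌊(t - s) / (h / 2 ^ (n₀ + m))⌋₊ : ℝ) * (h / 2 ^ (n₀ + m)))) atTop (nhds (g t)) := by
      have htin : ContinuousWithinAt g (Set.Ici (0:ℝ)) t := hgcont t (le_trans hs hst)
      exact htin.tendsto.comp (tendsto_nhdsWithin_iff.mpr ⟨hts, Eventually.of_forall hmem⟩)
    exact le_of_tendsto hcw (Eventually.of_forall key)
  · -- non-decreasing after tstar
    intro s t hts hst
    have hs : (0 : ℝ) ≤ s := by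
      have h00 : T h = T (h / 2 ^ 0) := by norm_num
      have h0 : ((0:ℝ) : EReal) ≤ (s : EReal) := by
        rw [EReal.coe_zero]
        exact le_trans (le_trans (h00 ▸ hTnonneg h hh) (le_iSup (fun n => T (h / 2 ^ n)) 0)) hts
      exact_mod_cast h0
    have key : ∀ m : ℕ,
        g s ≤ g (s + (⌊(t - s) / (h / 2 ^ m)⌋₊ : ℝ) * (h / 2 ^ m)) := by
      intro m
      set c := h / 2 ^ m with hcdef
      have hcpos : 0 < c := hpos m
      apply chain_ge
      intro j hj
      have hjnn : (0 : ℝ) ≤ s + (j : ℝ) * c := by positivity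
      apply hafter c hcpos _ hjnn
      calc T c ≤ ⨆ n, T (h / 2 ^ n) := le_iSup (fun n => T (h / 2 ^ n)) m
        _ ≤ (s : EReal) := hts
        _ ≤ ((s + (j : ℝ) * c : ℝ) : EReal) := by
            exact_mod_cast (by nlinarith : s ≤ s + (j : ℝ) * c)
    have hts' : Tendsto (fun m : ℕ => s + (⌊(t - s) / (h / 2 ^ m)⌋₊ : ℝ) * (h / 2 ^ m)) atTop (nhds t) := by
      have := seq_tendsto s t h hh hst
      simpa using this
    have hmem : ∀ m : ℕ, s + (⌊(t - s) / (h / 2 ^ m)⌋₊ : ℝ) * (h / 2 ^ m) ∈ Set.Ici (0 : ℝ) := by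
      intro m
      have : (0:ℝ) ≤ (⌊(t - s) / (h / 2 ^ m)⌋₊ : ℝ) * (h / 2 ^ m) := by positivity
      simp only [Set.mem_Ici]; linarith
    have hcw : Tendsto (fun m : ℕ => g (s + (⌊(t - s) / (h / 2 ^ m)⌋₊ : ℝ) * (h / 2 ^ m))) atTop (nhds (g t)) := by
      have htin : ContinuousWithinAt g (Set.Ici (0:ℝ)) t := hgcont t (le_trans hs hst)
      exact htin.tendsto.comp (tendsto_nhdsWithin_iff.mpr ⟨hts', Eventually.of_forall hmem⟩)
    exact ge_of_tendsto hcw (Eventually.of_forall key)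
end
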